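/- arXiv:1207.0703 — 3 statements merged into one kernel-verified Lean document; each statement's English description precedes it below -/
import Mathlib

section
/- Let R be a commutative Noetherian ring, I an ideal of R, and K an R-module with Supp(K) ⊆ V(I). If there exists x ∈ I such that both (0 :_K x) and K/xK are I-cofinite (i.e., Ext^j_R(R/I, −) is finitely generated for all j ≥ 0), then K is I-cofinite. -/
open Opposite CategoryTheory CategoryTheory.Limits

noncomputable section

universe u

variable (R : Type u) [CommRing R]

/-- The directed system `n ↦ M ⧸ I^n M` (contravariant in `n`). -/
def modIdealPowersDiagram (I : Ideal R) (M : Type u) [AddCommGroup M] [Module R M] :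
    ℕᵒᵖ ⥤ ModuleCat.{u} R where
  obj t := ModuleCat.of R (M ⧸ (I ^ (unop t) • ⊤ : Submodule R M))
  map w := ModuleCat.ofHom (Submodule.mapQ _ _ LinearMap.id
    (Submodule.smul_mono_left (Ideal.pow_le_pow_right w.unop.down.down)))
  map_id t := by
    ext : 1
    exact Submodule.mapQ_id _
  map_comp f g := by
    ext : 1
    simp only [ModuleCat.hom_comp, ModuleCat.hom_ofHom]
    rw [← Submodule.mapQ_comp]
    simp

/-- `H^j_I(M,N) = colim_n Ext^j_R(M/I^nM, N)`, the generalized local cohomology module. -/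
def genLocalCohomology (I : Ideal R) (M N : Type u) [AddCommGroup M] [Module R M]
    [AddCommGroup N] [Module R N] (j : ℕ) : ModuleCat.{u} R :=
  colimit ((modIdealPowersDiagram R I M).op ⋙ Ext R (ModuleCat.{u} R) j ⋙
    (evaluation (ModuleCat.{u} R) (ModuleCat.{u} R)).obj (ModuleCat.of R N))

/-- `Ext^j_R(A, B)` as an `R`-module. -/
def extModule (j : ℕ) (A B : Type u) [AddCommGroup A] [Module R A]
    [AddCommGroup B] [Module R B] : ModuleCat.{u} R :=
  ((Ext R (ModuleCat.{u} R) j).obj (op (ModuleCat.of R A))).obj (ModuleCat.of R B)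

/-- `K` is `I`-cofinite: `Supp K ⊆ V(I)` and every `Ext^j_R(R/I, K)` is finitely generated. -/
def IsCofinite (I : Ideal R) (K : Type u) [AddCommGroup K] [Module R K] : Prop :=
  Module.support R K ⊆ PrimeSpectrum.zeroLocus (I : Set R) ∧
    ∀ j : ℕ, Module.Finite R (extModule R j (R ⧸ I) K)

/-- The `I`-torsion submodule `Γ_I(N)`. -/
def gammaTorsion (I : Ideal R) (N : Type u) [AddCommGroup N] [Module R N] : Submodule R N :=
  ⨆ k : ℕ, Submodule.torsionBySet R N ((I ^ k : Ideal R) : Set R)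

/-- `I_M := ann_R(M/IM)`. -/
def idealAnnQuot (I : Ideal R) (M : Type u) [AddCommGroup M] [Module R M] : Ideal R :=
  Module.annihilator R (M ⧸ (I • ⊤ : Submodule R M))

/-- A minimax module: a f.g. submodule with Artinian quotient. -/
def IsMinimax (K : Type u) [AddCommGroup K] [Module R K] : Prop :=
  ∃ T : Submodule R K, Module.Finite R T ∧ IsArtinian R (K ⧸ T)

/-- A nontrivial module is `p`-secondary if every `a : R` acts surjectively or nilpotently
and `p = √(ann S)`. -/
def IsSecondary (p : Ideal R) (S : Type u) [AddCommGroup S] [Module R S] : Prop :=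
  Nontrivial S ∧ (∀ a : R, Function.Surjective (fun s : S => a • s) ∨
    ∃ n : ℕ, ∀ s : S, a ^ n • s = 0) ∧ p = (Module.annihilator R S).radical

/-- The attached primes of `A`: primes `p` such that `A` has a `p`-secondary quotient. -/
def attachedPrimes (A : Type u) [AddCommGroup A] [Module R A] : Set (Ideal R) :=
  { p | ∃ Q : Submodule R A, IsSecondary R p (A ⧸ Q) }

/-!
The short exact sequences `0 → (0 :_K x) → K → xK → 0` and `0 → xK → K → K/xK → 0` give maps
`β : Ext^j(R/I, K) → Ext^j(R/I, xK)` and `α : Ext^j(R/I, xK) → Ext^j(R/I, K)` whose composite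
`α ∘ β` is multiplication by `x`. It vanishes because multiplication by `x` on a projective
resolution of `R/I` lifts `x • 𝟙 = 0` and is therefore null-homotopic. By the long exact sequences, `ker α ⊇ im β = ker δ` with
`δ : Ext^j(R/I, xK) → Ext^{j+1}(R/I, (0 :_K x))`, so `im α` is a quotient of a submodule of the
latter, and `Ext^j(R/I, K) / im α` embeds into `Ext^j(R/I, K/xK)`. Over a Noetherian ring both
pieces are finitely generated.
-/

open HomologicalComplex

section

variable {k : Type*} [CommRing k] [IsNoetherianRing k]
  {E M L Q : Type*} [AddCommGroup E] [Module k E] [AddCommGroup M] [Module k M]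
  [AddCommGroup L] [Module k L] [AddCommGroup Q] [Module k Q]

open LinearMap in
lemma Module.Finite.of_exact_of_exact_of_comp_eq_zero
    {β : E →ₗ[k] M} {δ : M →ₗ[k] L} {α : M →ₗ[k] E} {γ : E →ₗ[k] Q}
    (hβδ : Function.Exact β δ) (hαγ : Function.Exact α γ) (hαβ : α ∘ₗ β = 0)
    [Module.Finite k L] [Module.Finite k Q] : Module.Finite k E := by
  have hδα : ker δ ≤ ker α := by
    rw [hβδ.linearMap_ker_eq]
    rintro _ ⟨e, rfl⟩
    exact LinearMap.congr_fun hαβ e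
  have : Module.Finite k (M ⧸ ker δ) :=
    .of_injective ((ker δ).liftQ δ le_rfl) (ker_eq_bot.mp ((ker δ).ker_liftQ_eq_bot' δ rfl))
  have : Module.Finite k (LinearMap.range α) := by
    rw [← Submodule.range_liftQ (ker δ) α hδα]
    infer_instance
  have : Module.Finite k (LinearMap.range γ) :=
    .of_injective (LinearMap.range γ).subtype (LinearMap.range γ).injective_subtype
  refine Module.Finite.of_exact (f := (LinearMap.range α).subtype) (g := γ.rangeRestrict) ?_
    γ.surjective_rangeRestrict
  rw [LinearMap.exact_iff, ker_rangeRestrict, Submodule.range_subtype, hαγ.linearMap_ker_eq]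

end

namespace ChainComplex

variable {k : Type*} [Ring k] {C : Type*} [Category C] [Abelian C] [Linear k C]
  (Q : ChainComplex C ℕ)

def linearYonedaObjMap {N₁ N₂ : C} (f : N₁ ⟶ N₂) :
    Q.linearYonedaObj k N₁ ⟶ Q.linearYonedaObj k N₂ where
  f i := ModuleCat.ofHom (Linear.rightComp k _ f)
  comm' i j _ := by
    ext (g : Q.X i ⟶ N₁)
    exact (Category.assoc _ _ _).symm

lemma linearYonedaObjMap_comp {N₁ N₂ N₃ : C} (f : N₁ ⟶ N₂) (g : N₂ ⟶ N₃) :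
    Q.linearYonedaObjMap (k := k) (f ≫ g) =
      Q.linearYonedaObjMap f ≫ Q.linearYonedaObjMap g := by
  ext i (h : Q.X i ⟶ N₁)
  exact (Category.assoc _ _ _).symm

def linearYonedaObjShortComplex (S : ShortComplex C) :
    ShortComplex (CochainComplex (ModuleCat k) ℕ) :=
  ShortComplex.mk (Q.linearYonedaObjMap S.f) (Q.linearYonedaObjMap S.g) (by
    rw [← linearYonedaObjMap_comp, S.zero]
    ext i (h : Q.X i ⟶ S.X₁)
    exact comp_zero)

lemma linearYonedaObjShortComplex_shortExact [∀ i, Projective (Q.X i)] {S : ShortComplex C}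
    (hS : S.ShortExact) : (Q.linearYonedaObjShortComplex (k := k) S).ShortExact := by
  rw [shortExact_iff_degreewise_shortExact]
  intro i
  have := hS.mono_f
  have := hS.epi_g
  refine ModuleCat.shortComplex_shortExact _ (fun h : Q.X i ⟶ S.X₂ ↦ ⟨fun hh ↦
      ⟨hS.exact.lift h hh, hS.exact.lift_f h hh⟩, ?_⟩) (fun g₁ g₂ h ↦ (cancel_mono S.f).mp h)
    (fun h : Q.X i ⟶ S.X₃ ↦ ⟨Projective.factorThru h S.g, Projective.factorThru_comp h S.g⟩)
  rintro ⟨l : Q.X i ⟶ S.X₁, rfl⟩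
  show (l ≫ S.f) ≫ S.g = 0
  simp

/-- Postcomposing with `r • 𝟙 N` is precomposing with `r • 𝟙 Q`, so the homotopy `h` is carried
over by the additive functor `Hom(-, N)`. -/
lemma homologyMap_linearYonedaObjMap_smul_eq_zero {r : k} (h : Homotopy (r • 𝟙 Q) 0) (N : C)
    (j : ℕ) : homologyMap (Q.linearYonedaObjMap (k := k) (r • 𝟙 N)) j = 0 := by
  let F := ((linearYoneda k C).obj N).rightOp
  have e₁ : Q.linearYonedaObjMap (k := k) (r • 𝟙 N) =
      (unopFunctor _ _).map ((F.mapHomologicalComplex _).map (r • 𝟙 Q)).op := by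
    ext i (g : Q.X i ⟶ N)
    show g ≫ (r • 𝟙 N) = (r • 𝟙 (Q.X i)) ≫ g
    simp
  have e₂ : (unopFunctor _ _).map ((F.mapHomologicalComplex _).map (0 : Q ⟶ Q)).op =
      (0 : Q.linearYonedaObj k N ⟶ _) := by
    simp only [Functor.map_zero, op_zero]
    rfl
  have H : Homotopy (Q.linearYonedaObjMap (k := k) (r • 𝟙 N)) 0 :=
    (Homotopy.ofEq e₁).trans ((F.mapHomotopy h).unop.trans (Homotopy.ofEq e₂))
  rw [H.homologyMap_eq j, homologyMap_zero]

end ChainComplex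

namespace CategoryTheory.ProjectiveResolution

variable {k : Type*} [Ring k] {C : Type*} [Category C] [Abelian C] [Linear k C] {X : C}

def smulHomotopyZero (P : ProjectiveResolution X) {r : k} (hr : r • 𝟙 X = 0) :
    Homotopy (r • 𝟙 P.complex) 0 :=
  liftHomotopy (r • 𝟙 X) _ _ (by
    ext : 1
    simp only [comp_f, smul_f_apply, Linear.smul_comp, Category.id_comp,
      ChainComplex.single₀_map_f_zero]
    exact ((Linear.comp_smul _ _ _ (P.π.f 0) r (𝟙 _)).trans (by rw [Category.comp_id])).symm)
    (by rw [hr]; simp)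

end CategoryTheory.ProjectiveResolution

section

variable {k : Type*} [CommRing k] [IsNoetherianRing k] {C : Type*} [Category C] [Abelian C]
  [Linear k C] [EnoughProjectives C]

theorem finite_ext_of_shortExact_of_comp_eq_smul {X L K M N : C} {r : k} (hr : r • 𝟙 X = 0)
    {f₁ : L ⟶ K} {g₁ : K ⟶ M} {f₂ : M ⟶ K} {g₂ : K ⟶ N} {w₁ : f₁ ≫ g₁ = 0} {w₂ : f₂ ≫ g₂ = 0}
    (h₁ : (ShortComplex.mk f₁ g₁ w₁).ShortExact) (h₂ : (ShortComplex.mk f₂ g₂ w₂).ShortExact)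
    (hgf : g₁ ≫ f₂ = r • 𝟙 K) (j : ℕ)
    (hL : Module.Finite k (((Ext k C (j + 1)).obj (Opposite.op X)).obj L))
    (hN : Module.Finite k (((Ext k C j).obj (Opposite.op X)).obj N)) :
    Module.Finite k (((Ext k C j).obj (Opposite.op X)).obj K) := by
  let P := ProjectiveResolution.of X
  set T₁ := P.complex.linearYonedaObjShortComplex (k := k) (ShortComplex.mk f₁ g₁ w₁)
  set T₂ := P.complex.linearYonedaObjShortComplex (k := k) (ShortComplex.mk f₂ g₂ w₂)
  have hT₁ : T₁.ShortExact := P.complex.linearYonedaObjShortComplex_shortExact h₁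
  have hT₂ : T₂.ShortExact := P.complex.linearYonedaObjShortComplex_shortExact h₂
  have hcomp : homologyMap T₁.g j ≫ homologyMap T₂.f j = 0 := by
    refine (homologyMap_comp _ _ _).symm.trans ?_
    change homologyMap (P.complex.linearYonedaObjMap g₁ ≫ P.complex.linearYonedaObjMap f₂) j = 0
    rw [← ChainComplex.linearYonedaObjMap_comp, hgf]
    exact P.complex.homologyMap_linearYonedaObjMap_smul_eq_zero (P.smulHomotopyZero hr) K j
  have : Module.Finite k (T₁.X₁.homology (j + 1)) :=
    (Module.Finite.equiv_iff (P.isoExt (j + 1) L).toLinearEquiv).mp hL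
  have : Module.Finite k (T₂.X₃.homology j) :=
    (Module.Finite.equiv_iff (P.isoExt j N).toLinearEquiv).mp hN
  have : Module.Finite k (T₁.X₂.homology j) :=
    Module.Finite.of_exact_of_exact_of_comp_eq_zero
      ((ShortComplex.ShortExact.moduleCat_exact_iff_function_exact _).mp
        (hT₁.homology_exact₃ j (j + 1) rfl))
      ((ShortComplex.ShortExact.moduleCat_exact_iff_function_exact _).mp
        (hT₂.homology_exact₂ j))
      (congrArg ModuleCat.Hom.hom hcomp)
  exact (Module.Finite.equiv_iff (P.isoExt j K).toLinearEquiv).mpr this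

end

theorem finite_extModule_of_mem_annihilator [IsNoetherianRing R] {A K : Type u}
    [AddCommGroup A] [Module R A] [AddCommGroup K] [Module R K]
    {x : R} (hx : x ∈ Module.annihilator R A) (j : ℕ)
    (hker : Module.Finite R (extModule R (j + 1) A (LinearMap.ker (LinearMap.lsmul R K x))))
    (hcoker : Module.Finite R (extModule R j A (K ⧸ LinearMap.range (LinearMap.lsmul R K x)))) :
    Module.Finite R (extModule R j A K) := by
  set f := LinearMap.lsmul R K x
  refine finite_ext_of_shortExact_of_comp_eq_smul (X := ModuleCat.of R A) (r := x)
    (f₁ := ModuleCat.ofHom (LinearMap.ker f).subtype) (g₁ := ModuleCat.ofHom f.rangeRestrict)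
    (f₂ := ModuleCat.ofHom (LinearMap.range f).subtype)
    (g₂ := ModuleCat.ofHom (LinearMap.range f).mkQ) (w₁ := by ext ⟨m, hm⟩; exact hm)
    (w₂ := by ext m; simp) ?_ ?_ ?_ ?_ j hker hcoker
  · ext a
    exact Module.mem_annihilator.mp hx a
  · exact ModuleCat.shortComplex_shortExact _
      (LinearMap.exact_iff.mpr (f.ker_rangeRestrict.trans (Submodule.range_subtype _).symm))
      (Submodule.injective_subtype _) f.surjective_rangeRestrict
  · exact ModuleCat.shortComplex_shortExact _
      (LinearMap.exact_subtype_mkQ _) (Submodule.injective_subtype _) (Submodule.mkQ_surjective _)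
  · rfl

/-- Melkersson's criterion: if `x ∈ I` and both `(0 :_K x)` and `K/xK` are `I`-cofinite,
and `Supp K ⊆ V(I)`, then `K` is `I`-cofinite. -/
theorem stmt0 [IsNoetherianRing R] (I : Ideal R) (K : Type u) [AddCommGroup K] [Module R K]
    (hsupp : Module.support R K ⊆ PrimeSpectrum.zeroLocus (I : Set R))
    (x : R) (hx : x ∈ I)
    (h1 : IsCofinite R I (LinearMap.ker (LinearMap.lsmul R K x)))
    (h2 : IsCofinite R I (K ⧸ LinearMap.range (LinearMap.lsmul R K x))) :
    IsCofinite R I K := by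
  have hxI : x ∈ Module.annihilator R (R ⧸ I) := Ideal.annihilator_quotient.ge hx
  exact ⟨hsupp, fun j ↦ finite_extModule_of_mem_annihilator R hxI j (h1.2 (j + 1)) (h2.2 j)⟩
end
end

section
/- Let R be a commutative Noetherian ring, I an ideal, and A an Artinian R-module. If (0 :_A I) is a finitely generated R-module, then I is not contained in any non-maximal attached prime of A; that is, I ⊄ p for every p ∈ Att(A) \ Max(R). -/
/-!
Let `A ⧸ Q` be `p`-secondary and, `A` being Artinian, let `A₁` be minimal with `A₁ + Q = A`.
Minimality gives `J A₁ = A₁` for every ideal `J` with `J A + Q = A`, and, through the Fitting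
decomposition of multiplication by `b ∈ p` on `A₁`, `√(ann A₁) = p`.
If `I ⊆ p`, some `I^t` kills `A₁`, so `A₁ ⊆ (0 :_A I^t)`. This is Noetherian by induction on `t`:
for generators `aᵢ` of `I`, `x ↦ (aᵢ x)ᵢ` embeds `(0 :_A I^(t+1)) ⧸ (0 :_A I)` into a power of
`(0 :_A I^t)`. So `A₁` is finitely generated.
If `p ⊊ m` with `m` maximal, an `a ∈ m \ p` acts surjectively on `A ⧸ Q`, hence
`A₁ = a A₁ ⊆ m A₁`, and Nakayama yields `r ≡ 1 (mod m)` with `r ∈ ann A₁ ⊆ p ⊆ m`, which is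
absurd.
-/

open Opposite CategoryTheory CategoryTheory.Limits

noncomputable section

universe u

variable (R : Type u) [CommRing R]

section

variable {R} {M : Type*} [AddCommGroup M] [Module R M]

namespace Submodule

theorem isNoetherian_torsionBySet_mul {J K : Ideal R} (hK : K.FG)
    [IsNoetherian R (torsionBySet R M J)] [IsNoetherian R (torsionBySet R M K)] :
    IsNoetherian R (torsionBySet R M ↑(J * K)) := by
  obtain ⟨s, rfl⟩ := hK
  have hsmul : ∀ a ∈ Ideal.span (s : Set R),
      ∀ x ∈ torsionBySet R M ↑(J * Ideal.span (s : Set R)), a • x ∈ torsionBySet R M J := by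
    intro a ha x hx
    rw [mem_torsionBySet_iff] at hx ⊢
    rintro ⟨b, hb⟩
    rw [smul_smul]
    exact hx ⟨b * a, Ideal.mul_mem_mul hb ha⟩
  let f := inclusion (torsionBySet_le_torsionBySet_of_subset (M := M)
    (Ideal.mul_le_right : J * Ideal.span (s : Set R) ≤ _))
  -- `x ↦ (a • x)ₐ` over the generators `a` of `K`; its kernel is `(0 :_M K)`
  let g : torsionBySet R M ↑(J * Ideal.span (s : Set R)) →ₗ[R] (s → torsionBySet R M J) :=
    LinearMap.pi fun a => ((LinearMap.lsmul R M a).comp (Submodule.subtype _)).codRestrict _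
      fun x => hsmul a (Ideal.subset_span a.2) x x.2
  refine isNoetherian_of_range_eq_ker f g ?_
  ext x
  have hK : torsionBySet R M ↑(Ideal.span (s : Set R)) = torsionBySet R M s :=
    (torsionBySet_eq_torsionBySet_span _).symm
  rw [range_inclusion, mem_comap, subtype_apply, hK, mem_torsionBySet_iff, LinearMap.mem_ker,
    funext_iff]
  exact forall_congr' fun a => (Subtype.ext_iff (a1 := g x a) (a2 := 0)).symm

theorem isNoetherian_torsionBySet_pow [IsNoetherianRing R] (I : Ideal R)
    [IsNoetherian R (torsionBySet R M I)] :
    ∀ n : ℕ, IsNoetherian R (torsionBySet R M ↑(I ^ n))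
  | 0 => by
    rw [pow_zero, Ideal.one_eq_top, top_coe, torsionBySet_univ]
    infer_instance
  | n + 1 => by
    have := isNoetherian_torsionBySet_pow I n
    rw [pow_succ]
    exact isNoetherian_torsionBySet_mul (IsNoetherian.noetherian I)

theorem fg_of_le_radical_annihilator [IsNoetherianRing R] {I : Ideal R}
    [IsNoetherian R (torsionBySet R M I)] {N : Submodule R M} (hI : I ≤ N.annihilator.radical) :
    N.FG := by
  obtain ⟨t, ht⟩ := Ideal.exists_pow_le_of_le_radical_of_fg hI (IsNoetherian.noetherian I)
  have := isNoetherian_torsionBySet_pow (M := M) I t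
  refine isNoetherian_submodule.mp this N fun x hx => ?_
  rw [mem_torsionBySet_iff]
  exact fun b => mem_annihilator.mp (ht b.2) x hx

theorem not_annihilator_le_of_fg_of_le_smul {J : Ideal R} (hJ : J ≠ ⊤) {N : Submodule R M}
    (hN : N.FG) (hle : N ≤ J • N) : ¬ N.annihilator ≤ J := by
  intro hann
  obtain ⟨r, hr1, hr⟩ := exists_sub_one_mem_and_smul_eq_zero_of_fg_of_le_smul J N hN hle
  have hr : r ∈ J := hann (mem_annihilator.mpr hr)
  exact hJ ((Ideal.eq_top_iff_one J).mpr (by simpa using J.sub_mem hr hr1))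

variable {N Q : Submodule R M}

theorem sup_eq_top_of_surjective_smul {a : R}
    (ha : Function.Surjective fun x : M ⧸ Q => a • x) : Ideal.span {a} • ⊤ ⊔ Q = ⊤ := by
  refine eq_top_iff'.mpr fun x => ?_
  obtain ⟨s, hs⟩ := ha (Q.mkQ x)
  obtain ⟨y, rfl⟩ := Q.mkQ_surjective s
  have hxy : x - a • y ∈ Q := (Quotient.eq Q).mp hs.symm
  exact mem_sup.mpr ⟨a • y, smul_mem_smul (Ideal.mem_span_singleton_self a) mem_top, _, hxy,
    add_sub_cancel _ _⟩

theorem annihilator_le_of_sup_eq_top (h : N ⊔ Q = ⊤) :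
    N.annihilator ≤ Module.annihilator R (M ⧸ Q) := by
  intro r hr
  rw [annihilator_quotient, mem_colon]
  intro x _
  obtain ⟨y, hy, q, hq, rfl⟩ := mem_sup.mp (h ▸ mem_top : x ∈ N ⊔ Q)
  rw [smul_add, mem_annihilator.mp hr y hy, zero_add]
  exact Q.smul_mem r hq

theorem smul_eq_of_minimal_sup_eq_top (hN : Minimal (· ⊔ Q = ⊤) N) {J : Ideal R}
    (hJ : J • ⊤ ⊔ Q = ⊤) : J • N = N := by
  refine hN.eq_of_le ?_ smul_le_right
  calc J • N ⊔ Q = J • N ⊔ (J • Q ⊔ Q) := by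
        rw [sup_eq_right.mpr (smul_le_right : J • Q ≤ Q)]
    _ = J • (N ⊔ Q) ⊔ Q := by rw [smul_sup, sup_assoc]
    _ = ⊤ := by rw [hN.prop, hJ]

theorem radical_annihilator_eq_of_minimal_sup_eq_top [IsArtinian R M]
    (hN : Minimal (· ⊔ Q = ⊤) N) :
    N.annihilator.radical = (Module.annihilator R (M ⧸ Q)).radical := by
  refine le_antisymm (Ideal.radical_mono (annihilator_le_of_sup_eq_top hN.prop))
    (Ideal.radical_le_radical_iff.mpr fun b hb => ?_)
  let f : Module.End R N := algebraMap R _ b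
  obtain ⟨n, hn, hcod⟩ :=
    ((Filter.eventually_gt_atTop 0).and f.eventually_codisjoint_ker_pow_range_pow).exists
  have hfn : ∀ x : N, ((f ^ n) x : M) = b ^ n • (x : M) := fun x => by rw [← map_pow]; rfl
  have hbn : ∀ x : M, b ^ n • x ∈ Q := by
    rw [annihilator_quotient] at hb
    exact fun x => mem_colon.mp (Ideal.pow_mem_of_mem _ hb n hn) x trivial
  have hNQ : N ⊔ Q = ⊤ := hN.prop
  -- the kernel part of the Fitting decomposition of `b` on `N` is already a supplement of `Q`
  have hker : (LinearMap.ker (f ^ n)).map N.subtype = N := by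
    refine hN.eq_of_le (top_le_iff.mp ?_) (map_subtype_le _ _)
    rw [← hNQ]
    refine sup_le (fun x hx => ?_) le_sup_right
    obtain ⟨k, hk, y, ⟨z, rfl⟩, hxy⟩ := mem_sup.mp (hcod.eq_top ▸ mem_top :
      (⟨x, hx⟩ : N) ∈ LinearMap.ker (f ^ n) ⊔ LinearMap.range (f ^ n))
    exact mem_sup.mpr ⟨k, mem_map_of_mem hk, _, hfn z ▸ hbn z, congrArg Subtype.val hxy⟩
  refine ⟨n, mem_annihilator.mpr fun x hx => ?_⟩
  obtain ⟨k, hk, rfl⟩ := hker ▸ hx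
  rw [subtype_apply, ← hfn, LinearMap.mem_ker.mp hk, coe_zero]

end Submodule

end

/-- If `A` is Artinian and `(0 :_A I)` is finitely generated, then `I` is not contained in any
non-maximal attached prime of `A`. -/
theorem stmt2 [IsNoetherianRing R] (I : Ideal R) (A : Type u) [AddCommGroup A] [Module R A]
    [IsArtinian R A]
    (hfg : Module.Finite R (Submodule.torsionBySet R A (I : Set R))) :
    ∀ p ∈ attachedPrimes R A, ¬ p.IsMaximal → ¬ I ≤ p := by
  rintro p ⟨Q, hnt, hdich, rfl⟩ hpmax hIp
  have : IsNoetherian R (Submodule.torsionBySet R A I) :=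
    isNoetherian_of_isNoetherianRing_of_finite R _
  obtain ⟨m, hm, hpm⟩ := Ideal.exists_le_maximal _ <| Ideal.radical_eq_top.not.mpr <|
    (Module.annihilator_eq_top_iff (R := R)).not.mpr (not_subsingleton (A ⧸ Q))
  obtain ⟨a, ham, hap⟩ := SetLike.exists_of_lt (hpm.lt_of_ne fun h => hpmax (h ▸ hm))
  have ha : Function.Surjective fun x : A ⧸ Q => a • x :=
    (hdich a).resolve_right fun ⟨n, hn⟩ => hap ⟨n, Module.mem_annihilator.mpr hn⟩
  obtain ⟨A₁, hA₁⟩ := exists_minimal_of_wellFoundedLT (· ⊔ Q = ⊤) ⟨⊤, top_sup_eq Q⟩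
  have hrad := Submodule.radical_annihilator_eq_of_minimal_sup_eq_top hA₁
  have hsmul : A₁ ≤ m • A₁ := calc
    A₁ = Ideal.span {a} • A₁ :=
      (Submodule.smul_eq_of_minimal_sup_eq_top hA₁
        (Submodule.sup_eq_top_of_surjective_smul ha)).symm
    _ ≤ m • A₁ := Submodule.smul_mono_left ((Ideal.span_singleton_le_iff_mem _).mpr ham)
  exact Submodule.not_annihilator_le_of_fg_of_le_smul hm.ne_top
    (Submodule.fg_of_le_radical_annihilator (hrad ▸ hIp)) hsmul
    (Ideal.le_radical.trans (hrad ▸ hpm))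

end
end

section
/- Let R be a commutative Noetherian ring, I an ideal, M, N finitely generated R-modules, and t a non-negative integer. Then Hom_R(R/I, H^t_I(M,N)) is finitely generated if and only if Hom_R(R/I_M, H^t_I(M,N)) is finitely generated, where I_M = ann_R(M/IM). -/
/-!
`Hom_R(R/K, H)` is the `K`-torsion `(0 :_H K)` of `H = H^t_I(M,N)`. Every `a ∈ ann M` kills `H`:
multiplication by `a` on a projective resolution of `M/I^nM` lifts `0`, so it is null-homotopic
and vanishes on `Ext^t(M/I^nM, N)`. Since `Supp(M/IM) = Supp M ∩ V(I)`, we have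
`I ⊆ I_M ⊆ √(I + ann M)`, hence `I_M^n ⊆ I + ann M` for some `n` and `(0 :_H I) ⊆ (0 :_H I_M^n)`.
Over a Noetherian ring finite generation of `(0 :_H J)` propagates to `(0 :_H J^n)`, so finite
generation of `(0 :_H I_M)` gives that of `(0 :_H I)`; the converse holds as
`(0 :_H I_M) ⊆ (0 :_H I)`.
-/

open Opposite CategoryTheory CategoryTheory.Limits

noncomputable section

universe u

variable (R : Type u) [CommRing R]

section Torsion

open Submodule

variable {R H : Type*} [CommRing R] [AddCommGroup H] [Module R H]

theorem Submodule.torsionBySet_sup_annihilator (K : Ideal R) :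
    torsionBySet R H ↑(K ⊔ Module.annihilator R H) = torsionBySet R H K := by
  refine le_antisymm (torsionBySet_le_torsionBySet_of_subset <| SetLike.coe_subset_coe.2
    le_sup_left) fun x hx => ?_
  refine (mem_torsionBySet_iff _ _).2 fun ⟨c, hc⟩ => ?_
  obtain ⟨a, ha, b, hb, rfl⟩ := Submodule.mem_sup.1 hc
  rw [add_smul, (mem_torsionBySet_iff _ _).1 hx ⟨a, ha⟩, Module.mem_annihilator.1 hb, add_zero]

def Submodule.homQuotientEquivTorsionBySet (K : Ideal R) :
    ((R ⧸ K) →ₗ[R] H) ≃ₗ[R] torsionBySet R H (K : Set R) where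
  toFun φ := ⟨φ 1, (mem_torsionBySet_iff _ _).2 fun a => by
    rw [← map_smul, Algebra.smul_def, mul_one, Ideal.Quotient.algebraMap_eq,
      Ideal.Quotient.eq_zero_iff_mem.2 a.2, map_zero]⟩
  map_add' φ ψ := rfl
  map_smul' a φ := rfl
  invFun x := K.liftQ (LinearMap.toSpanSingleton R H x) fun a ha =>
    (mem_torsionBySet_iff _ _).1 x.2 ⟨a, ha⟩
  left_inv φ := by
    ext
    exact one_smul R _
  right_inv x := by
    ext
    exact one_smul R _

theorem Submodule.finite_hom_quotient_iff_fg_torsionBySet (K : Ideal R) :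
    Module.Finite R ((R ⧸ K) →ₗ[R] H) ↔ (torsionBySet R H K).FG :=
  (Module.Finite.equiv_iff (homQuotientEquivTorsionBySet K)).trans Module.Finite.iff_fg

variable [IsNoetherianRing R]

theorem Submodule.fg_torsionBySet_mul {A B : Ideal R} (hA : (torsionBySet R H A).FG)
    (hB : (torsionBySet R H B).FG) : (torsionBySet R H ↑(A * B)).FG := by
  obtain ⟨s, rfl⟩ := IsNoetherian.noetherian A
  -- `x ↦ (a • x)_{a ∈ s}` maps `(0 :_H AB)` into `(0 :_H B)^s`, with kernel `(0 :_H A)`.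
  let f : H →ₗ[R] s → H := LinearMap.pi fun a => (a : R) • LinearMap.id
  refine fg_of_fg_map_of_fg_inf_ker f ?_ ?_
  · have := Module.Finite.iff_fg.2 hB
    refine (Module.Finite.iff_fg.1 (Module.Finite.range
      (LinearMap.pi fun a => (torsionBySet R H B).subtype ∘ₗ LinearMap.proj a))).of_le ?_
    rintro _ ⟨x, hx, rfl⟩
    refine ⟨fun a => ⟨(a : R) • x, (mem_torsionBySet_iff _ _).2 fun b => ?_⟩, rfl⟩
    rw [smul_smul]
    exact (mem_torsionBySet_iff _ _).1 hx
      ⟨_, mul_comm (a : R) b ▸ Ideal.mul_mem_mul (subset_span a.2) b.2⟩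
  · refine hA.of_le (inf_le_right.trans fun x hx => ?_)
    rw [← torsionBySet_eq_torsionBySet_span]
    simpa [f, funext_iff] using hx

theorem Submodule.fg_torsionBySet_pow {J : Ideal R} (hJ : (torsionBySet R H J).FG) (k : ℕ) :
    (torsionBySet R H ↑(J ^ k)).FG := by
  induction k with
  | zero => simpa [Ideal.one_eq_top] using fg_bot
  | succ k ih => exact pow_succ J k ▸ fg_torsionBySet_mul ih hJ

theorem Submodule.fg_torsionBySet_iff_of_le_radical {I J : Ideal R} (hIJ : I ≤ J)
    (hJ : J ≤ (I ⊔ Module.annihilator R H).radical) :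
    (torsionBySet R H I).FG ↔ (torsionBySet R H J).FG := by
  refine ⟨fun h => h.of_le (torsionBySet_le_torsionBySet_of_subset hIJ), fun h => ?_⟩
  obtain ⟨n, hn⟩ := Ideal.exists_pow_le_of_le_radical_of_fg hJ (IsNoetherian.noetherian J)
  rw [← torsionBySet_sup_annihilator]
  exact (fg_torsionBySet_pow h n).of_le (torsionBySet_le_torsionBySet_of_subset hn)

end Torsion

theorem le_idealAnnQuot (I : Ideal R) (M : Type u) [AddCommGroup M] [Module R M] :
    I ≤ idealAnnQuot R I M := fun a ha => Module.mem_annihilator.2 fun x => by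
  obtain ⟨m, rfl⟩ := Submodule.Quotient.mk_surjective _ x
  rw [← Submodule.Quotient.mk_smul, Submodule.Quotient.mk_eq_zero]
  exact Submodule.smul_mem_smul ha Submodule.mem_top

theorem idealAnnQuot_le_radical (I : Ideal R) (M : Type u) [AddCommGroup M] [Module R M]
    [Module.Finite R M] : idealAnnQuot R I M ≤ (I ⊔ Module.annihilator R M).radical := by
  have h := Module.support_quotient (M := M) I
  rw [Module.support_eq_zeroLocus, Module.support_eq_zeroLocus, ← PrimeSpectrum.zeroLocus_sup,
    sup_comm] at h
  rw [idealAnnQuot, ← PrimeSpectrum.zeroLocus_subset_zeroLocus_iff, h]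

section Ext

variable {R}

theorem ModuleCat.smul_id_eq_zero_iff {X : ModuleCat.{u} R} {a : R} :
    a • 𝟙 X = 0 ↔ a ∈ Module.annihilator R X := by
  rw [Module.mem_annihilator, ModuleCat.hom_ext_iff, LinearMap.ext_iff]
  rfl

theorem ModuleCat.smul_id_eq_zero_of_iso {X Y : ModuleCat.{u} R}
    (e : X ≅ Y) {a : R} (h : a • 𝟙 Y = 0) : a • 𝟙 X = 0 := by
  have : a • 𝟙 X = e.hom ≫ (a • 𝟙 Y) ≫ e.inv := by simp
  rw [this, h, zero_comp, comp_zero]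

def Homotopy.linearYonedaObjSmul {C : Type*} [Category C] [Abelian C] [Linear R C]
    {X : ChainComplex C ℕ} {a : R} (h : Homotopy (a • 𝟙 X) 0) (Y : C) :
    Homotopy (a • 𝟙 (X.linearYonedaObj R Y)) 0 where
  hom i j := show (X.linearYonedaObj R Y).X i ⟶ _ from
    ModuleCat.ofHom (Linear.leftComp R Y (h.hom j i))
  zero i j hij := by
    rw [h.zero j i hij]
    ext
    exact zero_comp
  comm i := by
    have hX := h.comm i
    rw [dNext_nat, prevD_eq h.hom (show (ComplexShape.down ℕ).Rel (i+1) i by simp)] at hX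
    rw [dNext_eq _ (show (ComplexShape.up ℕ).Rel i (i+1) by simp), prevD_nat]
    simp only [HomologicalComplex.smul_f_apply, HomologicalComplex.id_f,
      HomologicalComplex.zero_f_apply, add_zero] at hX ⊢
    ext (φ : X.X i ⟶ Y)
    change a • φ = h.hom i (i + 1) ≫ X.d (i + 1) i ≫ φ + X.d i (i - 1) ≫ h.hom (i - 1) i ≫ φ
    simpa [Linear.smul_comp, Preadditive.add_comp, add_comm] using congrArg (· ≫ φ) hX

theorem HomologicalComplex.homologyMap_smul {C ι : Type*} [Category C] [Preadditive C]
    [Linear R C] {c : ComplexShape ι} {K L : HomologicalComplex C c} (a : R) (φ : K ⟶ L) (i : ι)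
    [K.HasHomology i] [L.HasHomology i] : homologyMap (a • φ) i = a • homologyMap φ i :=
  ShortComplex.homologyMap_smul ((shortComplexFunctor C c i).map φ) a

theorem Ext_smul_id_eq_zero {A : ModuleCat.{u} R} {a : R} (hA : a • 𝟙 A = 0)
    (B : ModuleCat.{u} R) (n : ℕ) : a • 𝟙 (((Ext R (ModuleCat.{u} R) n).obj (op A)).obj B) = 0 := by
  obtain ⟨P⟩ := (inferInstance : HasProjectiveResolution A).out
  have hπ : (a • 𝟙 P.complex) ≫ P.π = 0 := by
    apply HomologicalComplex.to_single_hom_ext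
    rw [HomologicalComplex.comp_f, HomologicalComplex.smul_f_apply, HomologicalComplex.id_f,
      Linear.smul_comp, Category.id_comp, ← Category.comp_id (P.π.f 0), ← Linear.comp_smul]
    exact (P.π.f 0) ≫= hA
  let K := P.complex.linearYonedaObj R B
  have hK : HomologicalComplex.homologyMap (a • 𝟙 K) n = 0 :=
    ((ProjectiveResolution.liftHomotopyZero _ hπ).linearYonedaObjSmul B).homologyMap_eq n |>.trans
      (HomologicalComplex.homologyMap_zero _ _ n)
  refine ModuleCat.smul_id_eq_zero_of_iso (P.isoExt n B) ?_
  rwa [HomologicalComplex.homologyMap_smul, HomologicalComplex.homologyMap_id] at hK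

theorem ModuleCat.smul_id_colimit_eq_zero {J : Type*} [Category J] (F : J ⥤ ModuleCat.{u} R)
    [HasColimit F] {a : R} (h : ∀ j, a • 𝟙 (F.obj j) = 0) : a • 𝟙 (colimit F) = 0 := by
  refine colimit.hom_ext fun j => ?_
  rw [Linear.comp_smul, Category.comp_id, comp_zero, ← Category.id_comp (colimit.ι F j),
    ← Linear.smul_comp, h, zero_comp]

theorem annihilator_le_annihilator_genLocalCohomology (I : Ideal R) (M N : Type u)
    [AddCommGroup M] [Module R M] [AddCommGroup N] [Module R N] (t : ℕ) :
    Module.annihilator R M ≤ Module.annihilator R (genLocalCohomology R I M N t) := by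
  intro a ha
  refine ModuleCat.smul_id_eq_zero_iff.1 (ModuleCat.smul_id_colimit_eq_zero _ fun j => ?_)
  refine Ext_smul_id_eq_zero (ModuleCat.smul_id_eq_zero_iff.2 ?_) _ t
  exact (Submodule.mkQ _).annihilator_le_of_surjective (Submodule.mkQ_surjective _) ha

end Ext

theorem stmt14 [IsNoetherianRing R] (I : Ideal R) (M N : Type u)
    [AddCommGroup M] [Module R M] [Module.Finite R M]
    [AddCommGroup N] [Module R N] (t : ℕ) :
    Module.Finite R ((R ⧸ I) →ₗ[R] (genLocalCohomology R I M N t)) ↔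
      Module.Finite R ((R ⧸ idealAnnQuot R I M) →ₗ[R] (genLocalCohomology R I M N t)) := by
  rw [Submodule.finite_hom_quotient_iff_fg_torsionBySet,
    Submodule.finite_hom_quotient_iff_fg_torsionBySet]
  refine Submodule.fg_torsionBySet_iff_of_le_radical (le_idealAnnQuot R I M) ?_
  exact (idealAnnQuot_le_radical R I M).trans <| Ideal.radical_mono <|
    sup_le_sup_left (annihilator_le_annihilator_genLocalCohomology I M N t) I

end
end
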